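/- Let A¹ and A² be symmetric real 2×2 matrices. In the octonions 𝕆, for t ∈ ℝ define E₁ = 𝐞 + t((A²₁₁ − A¹₁₂)𝐣 + (−A¹₁₁ − A²₁₂)𝐤), E₂ = 𝐢𝐞 + t((A²₁₂ − A¹₂₂)𝐣 + (−A¹₁₂ − A²₂₂)𝐤), and F₁ = 𝐢. Then the associator satisfies [E₁, E₂, F₁] := (E₁E₂)F₁ − E₁(E₂F₁) = t(−2(A²₁₁ + A²₂₂) 𝐣𝐞 + 2(A¹₁₁ + A¹₂₂) 𝐤𝐞). In particular, the associator vanishes for all t ∈ ℝ if and only if trace A¹ = 0 and trace A² = 0. (This is the pointwise statement that the total space of the rank 1 sub-bundle E = span(ω¹) of Λ²₋(ℝ⁴)|_M over a surface M² ⊂ ℝ⁴ is an associative submanifold of ℝ⁷ if and only if the immersion M² ⊂ ℝ⁴ is minimal.) -/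

import Mathlib

noncomputable section

/-- The octonions as pairs of quaternions, `𝕆 = ℍ × ℍ`. -/
abbrev Octo := Quaternion ℝ × Quaternion ℝ

/-- Cayley–Dickson multiplication `(a,b)·(c,d) = (ac − d̄b, da + bc̄)`. -/
def omul (x y : Octo) : Octo :=
  (x.1 * y.1 - star y.2 * x.2, y.2 * x.1 + x.2 * star y.1)

def oI : Octo := (⟨0, 1, 0, 0⟩, 0)
def oJ : Octo := (⟨0, 0, 1, 0⟩, 0)
def oK : Octo := (⟨0, 0, 0, 1⟩, 0)
def oE : Octo := (0, 1)
def oIE : Octo := (0, ⟨0, 1, 0, 0⟩)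
def oJE : Octo := (0, ⟨0, 0, 1, 0⟩)
def oKE : Octo := (0, ⟨0, 0, 0, 1⟩)

/-- `E₁ = 𝐞 + t((A²₁₁ − A¹₁₂)𝐣 + (−A¹₁₁ − A²₁₂)𝐤)`. -/
def assocE1 (A1 A2 : Matrix (Fin 2) (Fin 2) ℝ) (t : ℝ) : Octo :=
  oE + t • ((A2 0 0 - A1 0 1) • oJ + (-(A1 0 0) - A2 0 1) • oK)

/-- `E₂ = 𝐢𝐞 + t((A²₁₂ − A¹₂₂)𝐣 + (−A¹₁₂ − A²₂₂)𝐤)`. -/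
def assocE2 (A1 A2 : Matrix (Fin 2) (Fin 2) ℝ) (t : ℝ) : Octo :=
  oIE + t • ((A2 0 1 - A1 1 1) • oJ + (-(A1 0 1) - A2 1 1) • oK)

/-- The associator `[x, y, z] = (xy)z − x(yz)`. -/
def octoAssociator (x y z : Octo) : Octo :=
  omul (omul x y) z - omul x (omul y z)

set_option maxHeartbeats 1000000 in
/-- the associator formula
`[E₁, E₂, 𝐢] = t(−2(tr A²)𝐣𝐞 + 2(tr A¹)𝐤𝐞)`, and the consequent pointwise
statement that the rank 1 bundle `E = span(ω¹)` over a surface `M² ⊂ ℝ⁴` is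
associative iff the surface is minimal. -/
theorem stmt7 (A1 A2 : Matrix (Fin 2) (Fin 2) ℝ) (hA1 : A1.IsSymm) (hA2 : A2.IsSymm) :
    (∀ t : ℝ, octoAssociator (assocE1 A1 A2 t) (assocE2 A1 A2 t) oI
      = t • ((-2 * (A2 0 0 + A2 1 1)) • oJE + (2 * (A1 0 0 + A1 1 1)) • oKE)) ∧
    ((∀ t : ℝ, octoAssociator (assocE1 A1 A2 t) (assocE2 A1 A2 t) oI = 0) ↔
      (A1 0 0 + A1 1 1 = 0 ∧ A2 0 0 + A2 1 1 = 0)) := by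
  have key : ∀ t : ℝ, octoAssociator (assocE1 A1 A2 t) (assocE2 A1 A2 t) oI
      = t • ((-2 * (A2 0 0 + A2 1 1)) • oJE + (2 * (A1 0 0 + A1 1 1)) • oKE) := by
    intro t
    simp only [octoAssociator, omul, assocE1, assocE2,
      Prod.ext_iff, Prod.fst_add, Prod.snd_add, Prod.fst_sub, Prod.snd_sub,
      Prod.smul_fst, Prod.smul_snd, Prod.fst_mul, Prod.snd_mul]
    constructor <;>
      ext <;>
      simp [Quaternion.ext_iff, Quaternion.re_mul, Quaternion.imI_mul, Quaternion.imJ_mul,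
        Quaternion.imK_mul, Quaternion.re_smul, Quaternion.imI_smul, Quaternion.imJ_smul,
        Quaternion.imK_smul, Quaternion.re_add, Quaternion.imI_add, Quaternion.imJ_add,
        Quaternion.imK_add, Quaternion.re_sub, Quaternion.imI_sub, Quaternion.imJ_sub,
        Quaternion.imK_sub, Quaternion.re_star, Quaternion.imI_star, Quaternion.imJ_star,
        Quaternion.imK_star] <;> simp [oI, oJ, oK, oE, oIE, oJE, oKE, Quaternion.re_zero, Quaternion.imI_zero, Quaternion.imJ_zero, Quaternion.imK_zero, Quaternion.re_one, Quaternion.imI_one, Quaternion.imJ_one, Quaternion.imK_one] <;> ring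
  refine ⟨key, ?_, fun ⟨h1, h2⟩ t => by simp [key t, h1, h2]⟩
  intro h
  have := h 1
  rw [key 1] at this
  simp only [one_smul, Prod.ext_iff, Prod.fst_add, Prod.snd_add, Prod.smul_fst, Prod.smul_snd,
    Quaternion.ext_iff, Quaternion.re_smul, Quaternion.imI_smul, Quaternion.imJ_smul, Quaternion.imK_smul,
    Quaternion.re_add, Quaternion.imI_add, Quaternion.imJ_add, Quaternion.imK_add] at this
  simp [oJE, oKE, Quaternion.re_zero, Quaternion.imI_zero, Quaternion.imJ_zero, Quaternion.imK_zero, Quaternion.re_one, Quaternion.imI_one, Quaternion.imJ_one, Quaternion.imK_one] at this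
  constructor <;> nlinarith [this]
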